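/- Let Λ ≥ 1, C₁ > 2, C > 0 and l ∈ (0,1) be real constants. For t ∈ (0, e^{−e}) set g(t) = (C₁Λ + C₁)^{1/2} · (log(log(1/t)))^{−1/2} and κ(t) = log((3/2) · g(t)^{−1}). Then there exists t₀ ∈ (0, e^{−e}) such that for all t ∈ (0, t₀): (C e^{κ(t)})^{C e^{4Λ κ(t) e^{κ(t)}}} ≤ t^{−l}. -/

import Mathlib

open Set

noncomputable section

/-- `g(t) = (C₁Λ + C₁)^{1/2} (log(log(1/t)))^{-1/2}`. -/
def gFun (C₁ Λ t : ℝ) : ℝ :=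
  (C₁ * Λ + C₁) ^ ((1 : ℝ) / 2) * Real.log (Real.log (1 / t)) ^ (-(1 / 2 : ℝ))

/-- `κ(t) = log((3/2) g(t)⁻¹)`. -/
def κFun (C₁ Λ t : ℝ) : ℝ := Real.log ((3 / 2) * (gFun C₁ Λ t)⁻¹)

/-!
Put `y = √(log (log (1/t)))`, so that `y → ∞` as `t → 0⁺`. Then `exp κ(t) = β y` with
`β = (3/2) (C₁Λ + C₁)^{-1/2}`, the left-hand side is `exp (log (C β y) · C exp (4Λ β y log (β y)))`
and `t^{-l} = exp (l exp (y²))`. Since `log (C β y) ≤ C β exp y`, the claim reduces to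
`(p + q log y) y + r ≤ y²` for suitable constants `p, q, r`, which holds for large `y`
because `log y = o(y)`.
-/

open Real Filter Topology Asymptotics

lemma eventually_mul_log_add_le_sq (p q r : ℝ) :
    ∀ᶠ y in atTop, (p + q * log y) * y + r ≤ y ^ 2 := by
  have hlin : (fun y => p + q * log y) =o[atTop] id :=
    (isLittleO_const_id_atTop p).add (isLittleO_log_id_atTop.const_mul_left q)
  have hconst : (fun _ => r) =o[atTop] fun y : ℝ => y ^ 2 := by
    simpa using (isLittleO_pow_pow_atTop_of_lt (𝕜 := ℝ) two_pos).const_mul_left r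
  have hquad : (fun y => (p + q * log y) * y + r) =o[atTop] fun y => y ^ 2 := by
    refine IsLittleO.add ?_ hconst
    simpa [sq] using hlin.mul_isBigO (isBigO_refl id atTop)
  filter_upwards [hquad.bound one_pos] with y hy
  simpa using (le_abs_self _).trans hy

lemma eventually_rpow_le_exp_mul_exp_sq (Λ : ℝ) {C β l : ℝ} (hC : 0 < C) (hβ : 0 < β)
    (hl : 0 < l) :
    ∀ᶠ y in atTop,
      (C * (β * y)) ^ (C * exp (4 * Λ * log (β * y) * (β * y))) ≤ exp (l * exp (y ^ 2)) := by
  filter_upwards [eventually_mul_log_add_le_sq (4 * Λ * β * log β + 1) (4 * Λ * β)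
    (log (C ^ 2 * β / l)), eventually_gt_atTop 0] with y hle hy
  have hlog : log (C * (β * y)) ≤ C * β * exp y := by
    have := log_le_sub_one_of_pos (show 0 < C * (β * y) by positivity)
    have := add_one_le_exp y
    nlinarith [mul_pos hC hβ]
  rw [rpow_def_of_pos (by positivity), exp_le_exp]
  calc log (C * (β * y)) * (C * exp (4 * Λ * log (β * y) * (β * y)))
      ≤ C * β * exp y * (C * exp (4 * Λ * log (β * y) * (β * y))) := by gcongr
    _ = l * exp (log (C ^ 2 * β / l) + y + 4 * Λ * log (β * y) * (β * y)) := by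
      rw [exp_add, exp_add, exp_log (by positivity)]
      field_simp
    _ ≤ l * exp (y ^ 2) := by
      gcongr
      rw [log_mul hβ.ne' hy.ne']
      linarith

lemma tendsto_log_one_div_nhdsGT_zero : Tendsto (fun t => log (1 / t)) (𝓝[>] 0) atTop := by
  simp_rw [one_div]
  exact tendsto_log_atTop.comp tendsto_inv_nhdsGT_zero

lemma exists_Ioo_forall_of_eventually_nhdsGT {α : Type*} [TopologicalSpace α] [LinearOrder α]
    [OrderTopology α] [NoMaxOrder α] [DenselyOrdered α] {a b : α} {P : α → Prop}
    (h : ∀ᶠ t in 𝓝[>] a, P t) (hab : a < b) : ∃ t₀ ∈ Ioo a b, ∀ t ∈ Ioo a t₀, P t := by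
  obtain ⟨u, hu, hsub⟩ := mem_nhdsGT_iff_exists_Ioo_subset.1 h
  obtain ⟨c, hac, hcb⟩ := exists_between hab
  exact ⟨min u c, ⟨lt_min hu hac, (min_le_right _ _).trans_lt hcb⟩,
    fun t ht => hsub ⟨ht.1, ht.2.trans_le (min_le_left _ _)⟩⟩

lemma κFun_eq_log_mul_sqrt (C₁ Λ : ℝ) {t : ℝ} (h : 0 ≤ log (log (1 / t))) :
    κFun C₁ Λ t = log (3 / 2 * ((C₁ * Λ + C₁) ^ (1 / 2 : ℝ))⁻¹ * √(log (log (1 / t)))) := by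
  rw [κFun, gFun, mul_inv, rpow_neg h, inv_inv, sqrt_eq_rpow, mul_assoc]

theorem stmt7_general (Λ C₁ C l : ℝ) (hΛ : 1 ≤ Λ) (hC₁ : 2 < C₁) (hC : 0 < C)
    (hl0 : 0 < l) :
    ∃ t₀ ∈ Ioo (0 : ℝ) (Real.exp (-Real.exp 1)),
      ∀ t ∈ Ioo (0 : ℝ) t₀,
        (C * Real.exp (κFun C₁ Λ t)) ^
            (C * Real.exp (4 * Λ * κFun C₁ Λ t * Real.exp (κFun C₁ Λ t)))
          ≤ t ^ (-l) := by
  have hβ : 0 < 3 / 2 * ((C₁ * Λ + C₁) ^ (1 / 2 : ℝ))⁻¹ := by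
    have : 0 < C₁ * Λ + C₁ := by nlinarith
    positivity
  have hs := tendsto_log_one_div_nhdsGT_zero
  have hy : Tendsto (fun t => √(log (log (1 / t)))) (𝓝[>] 0) atTop :=
    tendsto_sqrt_atTop.comp (tendsto_log_atTop.comp hs)
  refine exists_Ioo_forall_of_eventually_nhdsGT ?_ (exp_pos _)
  filter_upwards [hy.eventually (eventually_rpow_le_exp_mul_exp_sq Λ hC hβ hl0),
    hs.eventually_gt_atTop 1, self_mem_nhdsWithin] with t hle hlog ht
  have hL : 0 < log (log (1 / t)) := log_pos hlog
  have hrhs : t ^ (-l) = exp (l * exp (√(log (log (1 / t))) ^ 2)) := by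
    rw [sq_sqrt hL.le, exp_log (by linarith), rpow_def_of_pos ht, one_div, log_inv]
    congr 1
    ring
  rw [κFun_eq_log_mul_sqrt C₁ Λ hL.le, exp_log (by positivity), hrhs]
  exact hle

/-- Let `Λ ≥ 1`, `C₁ > 2`, `C > 0`, `l ∈ (0,1)`.  With `g` and `κ` as above, there is a
`t₀ ∈ (0, e^{-e})` such that for all `t ∈ (0, t₀)`,
`(C e^{κ(t)})^{C e^{4Λ κ(t) e^{κ(t)}}} ≤ t^{-l}`. -/
theorem stmt7 (Λ C₁ C l : ℝ) (hΛ : 1 ≤ Λ) (hC₁ : 2 < C₁) (hC : 0 < C)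
    (hl0 : 0 < l) (hl1 : l < 1) :
    ∃ t₀ ∈ Ioo (0 : ℝ) (Real.exp (-Real.exp 1)),
      ∀ t ∈ Ioo (0 : ℝ) t₀,
        (C * Real.exp (κFun C₁ Λ t)) ^
            (C * Real.exp (4 * Λ * κFun C₁ Λ t * Real.exp (κFun C₁ Λ t)))
          ≤ t ^ (-l) :=
  stmt7_general Λ C₁ C l hΛ hC₁ hC hl0
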